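/- Let c, s, L, E, I, A, A*, G > 0 be reals, let a, u, v be reals with 1 < a < 16, 1 < u < 4, 1 < v < 4, and let x₀ ∈ [0,1). Then as P → ∞ the horizontal displacements H(P,x₀) converge to 2·c·s·L·( 10·L²/(3·E·I·(16 − a)) − (20·L²/(3·E·I·a))·C_{a/16}(x₀) + (2/(E·A·u))·C_{u/4}(x₀) − 1/(E·A·(4 − u)) + 1/(G·A*·(4 − v)) − (2/(G·A*·v))·C_{v/4}(x₀) ), where C_t(x₀) = Σ_{k=1}^∞ ρ_k(x₀) t^k; that is, the horizontal displacements of the end nodes of the infinite binary tree are a linear combination of inverses of β-Cantor functions. -/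

import Mathlib

open Filter

/-- The `k`-th binary digit of `x ∈ [0,1)`: ρ_k(x) = ⌊2^k x⌋ − 2⌊2^{k−1} x⌋. -/
noncomputable def binDigit (k : ℕ) (x : ℝ) : ℤ := ⌊(2:ℝ) ^ k * x⌋ - 2 * ⌊(2:ℝ) ^ (k - 1) * x⌋

/-- The series C_t(x) = Σ_{k=1}^∞ ρ_k(x) t^k: the (rescaled) inverse β-Cantor function. -/
noncomputable def Cinf (t x : ℝ) : ℝ := ∑' k : ℕ, (binDigit (k + 1) x : ℝ) * t ^ (k + 1)

/-- Horizontal displacement per unit load of the end node located at `x₀` in a binary tree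
structure with `P` levels, from the Principle of Virtual Work (bending + axial + shear). -/
noncomputable def Hdisp (c s L E I A A' G a u v x₀ : ℝ) (P : ℕ) : ℝ :=
  (∑ i ∈ Finset.Icc 1 P, (a ^ (i - 1) / (E * I)) *
      ∫ x in (0:ℝ)..(L * 2 ^ ((1:ℤ) - (i:ℤ))),
        (s * L * (2 ^ ((2:ℤ) - (i:ℤ)) - 2 ^ ((1:ℤ) - (P:ℤ))) - s * x) *
          (1 - 2 * (binDigit i x₀ : ℝ)) *
          (c * 2 ^ (-(i:ℤ)) * (L * 2 ^ ((1:ℤ) - (i:ℤ)) - x))) +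
  (∑ i ∈ Finset.Icc 1 P,
      c * s * (2 * (binDigit i x₀ : ℝ) - 1) * 2 ^ (-(i:ℤ)) * L * 2 ^ ((1:ℤ) - (i:ℤ)) *
        u ^ (i - 1) / (E * A)) +
  (∑ i ∈ Finset.Icc 1 P,
      c * s * (1 - 2 * (binDigit i x₀ : ℝ)) * 2 ^ (-(i:ℤ)) * L * 2 ^ ((1:ℤ) - (i:ℤ)) *
        v ^ (i - 1) / (G * A'))

/-!
At level `i` the bars have length `ℓ_i = L·2^{1-i}`, so the bending integral is a cubic in `ℓ_i`, and every
summand of `Hdisp` becomes a multiple of `(1 - 2ρ_i(x₀)) t^i` with `t ∈ {a/16, a/8, u/4, v/4}`. Thus `Hdisp` is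
a fixed linear combination of the partial sums `Σ_{i ≤ P} (1 - 2ρ_i(x₀)) t^i`, the one for `t = a/8` carrying an
extra factor `2^{-P}` that comes from the `2^{1-P}` in `H_i`. For `|t| < 1` these partial sums converge to
`t/(1-t) - 2 C_t(x₀)`; the `2^{-P}`-weighted one tends to `0` since it is at most `P (max 1 |t| / 2)^P`
and `a/8 < 2`.
-/

open intervalIntegral

-- Index `0` is excluded: truncated subtraction makes `binDigit 0 x = -⌊x⌋`.
lemma binDigit_succ_eq_zero_or_one (k : ℕ) (x : ℝ) :
    binDigit (k + 1) x = 0 ∨ binDigit (k + 1) x = 1 := by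
  have hx : (2:ℝ) ^ (k + 1) * x = 2 * (2 ^ k * x) := by ring
  have h1 : 2 * ⌊(2:ℝ) ^ k * x⌋ ≤ ⌊(2:ℝ) ^ (k + 1) * x⌋ := by
    rw [Int.le_floor]; push_cast; linarith [Int.floor_le ((2:ℝ) ^ k * x)]
  have h2 : ⌊(2:ℝ) ^ (k + 1) * x⌋ < 2 * ⌊(2:ℝ) ^ k * x⌋ + 2 := by
    rw [Int.floor_lt]; push_cast; linarith [Int.lt_floor_add_one ((2:ℝ) ^ k * x)]
  unfold binDigit
  rw [Nat.add_sub_cancel]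
  omega

lemma abs_binDigit_succ_le_one (k : ℕ) (x : ℝ) : |(binDigit (k + 1) x : ℝ)| ≤ 1 := by
  rcases binDigit_succ_eq_zero_or_one k x with h | h <;> simp [h]

lemma abs_one_sub_two_mul_binDigit_succ (k : ℕ) (x : ℝ) :
    |1 - 2 * (binDigit (k + 1) x : ℝ)| = 1 := by
  rcases binDigit_succ_eq_zero_or_one k x with h | h <;> norm_num [h]

lemma summable_binDigit_mul_pow (x : ℝ) {t : ℝ} (ht : |t| < 1) :
    Summable fun k : ℕ => (binDigit (k + 1) x : ℝ) * t ^ (k + 1) := by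
  refine .of_norm_bounded ((summable_nat_add_iff 1).2 (summable_geometric_of_lt_one (abs_nonneg t) ht))
    fun k => ?_
  rw [norm_mul, Real.norm_eq_abs, norm_pow, Real.norm_eq_abs]
  exact mul_le_of_le_one_left (by positivity) (abs_binDigit_succ_le_one k x)

noncomputable def signedDigitSum (x t : ℝ) (P : ℕ) : ℝ :=
  ∑ i ∈ Finset.Icc 1 P, (1 - 2 * (binDigit i x : ℝ)) * t ^ i

lemma signedDigitSum_eq_sum_range (x t : ℝ) (P : ℕ) :
    signedDigitSum x t P = ∑ k ∈ Finset.range P, (1 - 2 * (binDigit (k + 1) x : ℝ)) * t ^ (k + 1) := by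
  rw [signedDigitSum, ← Finset.Ico_add_one_right_eq_Icc, Finset.sum_Ico_eq_sum_range,
    Nat.add_sub_cancel]
  simp only [add_comm 1]

lemma tendsto_signedDigitSum (x : ℝ) {t : ℝ} (ht : |t| < 1) :
    Tendsto (signedDigitSum x t) atTop (nhds (t / (1 - t) - 2 * Cinf t x)) := by
  have hgeom : HasSum (fun k : ℕ => t ^ (k + 1)) (t / (1 - t)) := by
    simpa only [← pow_succ', div_eq_mul_inv] using (hasSum_geometric_of_abs_lt_one ht).mul_left t
  have hdigits := (summable_binDigit_mul_pow x ht).hasSum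
  have hsum := (hgeom.sub (hdigits.mul_left 2)).tendsto_sum_nat
  refine hsum.congr fun P => ?_
  rw [signedDigitSum_eq_sum_range]
  exact Finset.sum_congr rfl fun k _ => by ring

lemma abs_signedDigitSum_le (x t : ℝ) (P : ℕ) : |signedDigitSum x t P| ≤ P * max 1 |t| ^ P := by
  calc |signedDigitSum x t P|
      ≤ ∑ i ∈ Finset.Icc 1 P, |(1 - 2 * (binDigit i x : ℝ)) * t ^ i| := Finset.abs_sum_le_sum_abs _ _
    _ ≤ ∑ _i ∈ Finset.Icc 1 P, max 1 |t| ^ P := by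
        refine Finset.sum_le_sum fun i hi => ?_
        obtain ⟨hi1, hiP⟩ := Finset.mem_Icc.1 hi
        obtain ⟨k, rfl⟩ := Nat.exists_eq_add_of_le' hi1
        rw [abs_mul, abs_one_sub_two_mul_binDigit_succ, one_mul, abs_pow]
        exact (pow_le_pow_left₀ (abs_nonneg t) (le_max_right 1 |t|) _).trans
          (pow_le_pow_right₀ (le_max_left 1 |t|) hiP)
    _ = P * max 1 |t| ^ P := by simp

lemma tendsto_signedDigitSum_div_two_pow (x : ℝ) {t : ℝ} (ht : |t| < 2) :
    Tendsto (fun P : ℕ => signedDigitSum x t P / 2 ^ P) atTop (nhds 0) := by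
  set M := max 1 |t|
  have hM : M / 2 < 1 := by rw [div_lt_one two_pos]; exact max_lt one_lt_two ht
  refine squeeze_zero_norm (fun P => ?_)
    (by simpa using tendsto_pow_const_mul_const_pow_of_lt_one 1 (by positivity) hM)
  rw [Real.norm_eq_abs, abs_div, abs_pow, abs_two, div_pow, mul_div_assoc']
  gcongr
  exact abs_signedDigitSum_le x t P

lemma integral_sub_mul_sub (h s ℓ : ℝ) :
    ∫ x in (0:ℝ)..ℓ, (h - s * x) * (ℓ - x) = h * ℓ ^ 2 / 2 - s * ℓ ^ 3 / 6 := by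
  have hF : ∀ x ∈ Set.uIcc (0:ℝ) ℓ, HasDerivAt
      (fun y => h * ℓ * y - (h + s * ℓ) * y ^ 2 / 2 + s * y ^ 3 / 3) ((h - s * x) * (ℓ - x)) x :=
    fun x _ => by
      refine ((((hasDerivAt_id x).const_mul (h * ℓ)).sub
        (((hasDerivAt_pow 2 x).const_mul (h + s * ℓ)).div_const 2)).add
        (((hasDerivAt_pow 3 x).const_mul s).div_const 3)).congr_deriv ?_
      norm_num; ring
  rw [integral_eq_sub_of_hasDerivAt hF (Continuous.intervalIntegrable (by fun_prop) _ _)]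
  ring

lemma two_zpow_sub_natCast (m : ℤ) (n : ℕ) : (2:ℝ) ^ (m - n) = 2 ^ m * ((2:ℝ) ^ n)⁻¹ := by
  rw [zpow_sub₀ two_ne_zero, zpow_natCast, div_eq_mul_inv]

lemma pow_div_two_pow_pow (t : ℝ) (i k : ℕ) : (t / 2 ^ k) ^ i = t ^ i * (((2:ℝ) ^ i) ^ k)⁻¹ := by
  rw [div_pow, pow_right_comm, div_eq_mul_inv]

lemma bending_level_eq (a E I c s L ε : ℝ) {i : ℕ} (P : ℕ) (hi : 1 ≤ i) (ha : a ≠ 0) :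
    a ^ (i - 1) / (E * I) *
      ∫ x in (0:ℝ)..(L * 2 ^ ((1:ℤ) - (i:ℤ))),
        (s * L * (2 ^ ((2:ℤ) - (i:ℤ)) - 2 ^ ((1:ℤ) - (P:ℤ))) - s * x) * ε *
          (c * 2 ^ (-(i:ℤ)) * (L * 2 ^ ((1:ℤ) - (i:ℤ)) - x)) =
      20 * c * s * L ^ 3 / (3 * E * I * a) * (ε * (a / 16) ^ i) -
        4 * c * s * L ^ 3 / (E * I * a) * (ε * (a / 8) ^ i) / 2 ^ P := by
  simp_rw [show ∀ h m ℓ x : ℝ, (h - s * x) * ε * (m * (ℓ - x)) = ε * m * ((h - s * x) * (ℓ - x))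
    from fun _ _ _ _ => by ring]
  rw [integral_const_mul, integral_sub_mul_sub, two_zpow_sub_natCast, two_zpow_sub_natCast,
    two_zpow_sub_natCast, zpow_neg, zpow_natCast, pow_sub₀ a ha hi,
    show (a / 16) ^ i = a ^ i * (((2:ℝ) ^ i) ^ 4)⁻¹ by norm_num [← pow_div_two_pow_pow],
    show (a / 8) ^ i = a ^ i * (((2:ℝ) ^ i) ^ 3)⁻¹ by norm_num [← pow_div_two_pow_pow]]
  ring

lemma axial_level_eq (c s L δ w K : ℝ) {i : ℕ} (hi : 1 ≤ i) (hw : w ≠ 0) :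
    c * s * δ * 2 ^ (-(i:ℤ)) * L * 2 ^ ((1:ℤ) - (i:ℤ)) * w ^ (i - 1) / K =
      2 * c * s * L / (K * w) * (δ * (w / 4) ^ i) := by
  rw [two_zpow_sub_natCast, zpow_neg, zpow_natCast, pow_sub₀ w hw hi,
    show (w / 4) ^ i = w ^ i * (((2:ℝ) ^ i) ^ 2)⁻¹ by norm_num [← pow_div_two_pow_pow]]
  ring

lemma Hdisp_eq (c s L E I A A' G a u v x : ℝ) (P : ℕ) (ha : a ≠ 0) (hu : u ≠ 0) (hv : v ≠ 0) :
    Hdisp c s L E I A A' G a u v x P =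
      20 * c * s * L ^ 3 / (3 * E * I * a) * signedDigitSum x (a / 16) P -
        4 * c * s * L ^ 3 / (E * I * a) * (signedDigitSum x (a / 8) P / 2 ^ P) -
        2 * c * s * L / (E * A * u) * signedDigitSum x (u / 4) P +
        2 * c * s * L / (G * A' * v) * signedDigitSum x (v / 4) P := by
  have hi : ∀ i ∈ Finset.Icc 1 P, 1 ≤ i := fun i hi => (Finset.mem_Icc.1 hi).1
  unfold Hdisp signedDigitSum
  rw [Finset.sum_congr rfl fun i h => bending_level_eq a E I c s L _ P (hi i h) ha,
    Finset.sum_congr rfl fun i h => axial_level_eq c s L _ u _ (hi i h) hu,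
    Finset.sum_congr rfl fun i h => axial_level_eq c s L _ v _ (hi i h) hv]
  simp only [Finset.mul_sum, Finset.sum_div, ← Finset.sum_sub_distrib, ← Finset.sum_add_distrib]
  exact Finset.sum_congr rfl fun i _ => by ring

theorem horizontal_displacement_infinite_general (c s L E I A A' G a u v : ℝ)
    (ha1 : 1 < a) (ha16 : a < 16) (hu1 : 1 < u) (hu4 : u < 4) (hv1 : 1 < v) (hv4 : v < 4)
    (x₀ : ℝ) :
    Tendsto (fun P : ℕ => Hdisp c s L E I A A' G a u v x₀ P) atTop
      (nhds (2 * c * s * L *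
        (10 * L ^ 2 / (3 * E * I * (16 - a)) -
          (20 * L ^ 2 / (3 * E * I * a)) * Cinf (a / 16) x₀ +
          (2 / (E * A * u)) * Cinf (u / 4) x₀ -
          1 / (E * A * (4 - u)) +
          1 / (G * A' * (4 - v)) -
          (2 / (G * A' * v)) * Cinf (v / 4) x₀))) := by
  have h16 := tendsto_signedDigitSum x₀ (t := a / 16) (abs_lt.2 ⟨by linarith, by linarith⟩)
  have h8 := tendsto_signedDigitSum_div_two_pow x₀ (t := a / 8) (abs_lt.2 ⟨by linarith, by linarith⟩)
  have hu := tendsto_signedDigitSum x₀ (t := u / 4) (abs_lt.2 ⟨by linarith, by linarith⟩)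
  have hv := tendsto_signedDigitSum x₀ (t := v / 4) (abs_lt.2 ⟨by linarith, by linarith⟩)
  simp_rw [Hdisp_eq c s L E I A A' G a u v x₀ _ (by positivity) (by positivity) (by positivity)]
  convert (((h16.const_mul _).sub (h8.const_mul _)).sub (hu.const_mul _)).add (hv.const_mul _) using 2
  have : (16:ℝ) - a ≠ 0 := by linarith
  have : (4:ℝ) - u ≠ 0 := by linarith
  have : (4:ℝ) - v ≠ 0 := by linarith
  have : a ≠ 0 := by positivity
  have : u ≠ 0 := by positivity
  have : v ≠ 0 := by positivity
  field_simp
  ring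

/-- For `1 < a < 16`, `1 < u < 4`, `1 < v < 4`, the horizontal displacements of the end
nodes converge, as the number of levels tends to infinity, to a linear combination of
inverses of β-Cantor functions. -/
theorem horizontal_displacement_infinite (c s L E I A A' G a u v : ℝ)
    (hc : 0 < c) (hs : 0 < s) (hL : 0 < L) (hE : 0 < E) (hI : 0 < I)
    (hA : 0 < A) (hA' : 0 < A') (hG : 0 < G)
    (ha1 : 1 < a) (ha16 : a < 16) (hu1 : 1 < u) (hu4 : u < 4) (hv1 : 1 < v) (hv4 : v < 4)
    (x₀ : ℝ) (hx₀ : x₀ ∈ Set.Ico (0:ℝ) 1) :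
    Tendsto (fun P : ℕ => Hdisp c s L E I A A' G a u v x₀ P) atTop
      (nhds (2 * c * s * L *
        (10 * L ^ 2 / (3 * E * I * (16 - a)) -
          (20 * L ^ 2 / (3 * E * I * a)) * Cinf (a / 16) x₀ +
          (2 / (E * A * u)) * Cinf (u / 4) x₀ -
          1 / (E * A * (4 - u)) +
          1 / (G * A' * (4 - v)) -
          (2 / (G * A' * v)) * Cinf (v / 4) x₀))) :=
  horizontal_displacement_infinite_general c s L E I A A' G a u v ha1 ha16 hu1 hu4 hv1 hv4 x₀
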